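/- arXiv:1904.02562 — 9 statements merged into one kernel-verified Lean document; each statement's English description precedes it below -/
import Mathlib

section
/- Each of the seven holomorphic vector fields X¹,…,X⁷ is an infinitesimal rigid CR automorphism of the model hypersurface M_LC: for every i ∈ {1,…,7} and every point p = (z₁, z₂, w) ∈ M_LC one has Re( Xⁱ₁(p)·(−conj(z₁) − z₁·conj(z₂)) + Xⁱ₂(p)·(−Re(w)·conj(z₂) − ½·conj(z₁)²) + Xⁱ₃(p)·(1 − z₂·conj(z₂))/2 ) = 0, i.e. the real vector field Xⁱ + conj(Xⁱ) is tangent to M_LC at p. -/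
open Complex ComplexConjugate

noncomputable section

/-- The tube over the future light cone, in coordinates `(z₁, z₂, w)`:
`Re w · (1 − z₂ z̄₂) = z₁ z̄₁ + Re (z₁² z̄₂)`, away from `z₂ z̄₂ = 1`. -/
def MLC : Set (ℂ × ℂ × ℂ) :=
  {p | p.2.1 * conj p.2.1 ≠ 1 ∧
    ((p.2.2.re : ℂ) * (1 - p.2.1 * conj p.2.1)
      = p.1 * conj p.1 + (((p.1 ^ 2 * conj p.2.1).re : ℂ)))}

/-- The seven holomorphic vector fields `X¹, …, X⁷` on `ℂ³`. -/
def Xfield : Fin 7 → (ℂ × ℂ × ℂ → ℂ × ℂ × ℂ) :=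
  ![fun _ => (0, 0, I),
    fun p => (p.1, 0, 2 * p.2.2),
    fun p => (I * p.1, 2 * I * p.2.1, 0),
    fun p => (p.2.1 - 1, 0, -2 * p.1),
    fun p => (I + I * p.2.1, 0, -2 * I * p.1),
    fun p => (p.1 * p.2.1, p.2.1 ^ 2 - 1, -p.1 ^ 2),
    fun p => (I * p.1 * p.2.1, I * p.2.1 ^ 2 + I, -I * p.1 ^ 2)]

/-- Each of the seven vector fields `X¹, …, X⁷` is an infinitesimal rigid CR automorphism of
the model `M_LC`: the real field `Xⁱ + conj Xⁱ` is tangent to `M_LC` at every point. -/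
theorem Xfield_tangent_MLC (i : Fin 7) (p : ℂ × ℂ × ℂ) (hp : p ∈ MLC) :
    ((Xfield i p).1 * (-(conj p.1) - p.1 * conj p.2.1)
      + (Xfield i p).2.1 * (-(p.2.2.re : ℂ) * conj p.2.1 - (1 / 2) * (conj p.1) ^ 2)
      + (Xfield i p).2.2 * (1 - p.2.1 * conj p.2.1) / 2).re = 0 := by
  obtain ⟨z1, z2, w⟩ := p
  obtain ⟨-, h⟩ := hp
  have hr := congrArg Complex.re h
  simp only [Complex.add_re, Complex.mul_re, Complex.mul_im, Complex.sub_re, Complex.sub_im,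
    Complex.one_re, Complex.one_im, Complex.ofReal_re, Complex.ofReal_im,
    Complex.conj_re, Complex.conj_im, pow_two] at hr
  fin_cases i <;> beta_reduce
  · rw [show ∀ h' : (0:ℕ) < 7, Xfield ⟨0, h'⟩ (z1, z2, w) = (0, 0, I) from fun _ => rfl]
    simp only [Complex.add_re, Complex.add_im, Complex.mul_re, Complex.mul_im, Complex.sub_re,
      Complex.sub_im, Complex.neg_re, Complex.neg_im, Complex.one_re, Complex.one_im,
      Complex.I_re, Complex.I_im, Complex.ofReal_re, Complex.ofReal_im, Complex.conj_re,
      Complex.conj_im, Complex.div_re, Complex.div_im, Complex.normSq_apply, Complex.zero_re,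
      Complex.zero_im, Complex.re_ofNat, Complex.im_ofNat, pow_two]
    ring
  · rw [show ∀ h' : (1:ℕ) < 7, Xfield ⟨1, h'⟩ (z1, z2, w) = (z1, 0, 2 * w) from fun _ => rfl]
    simp only [Complex.add_re, Complex.add_im, Complex.mul_re, Complex.mul_im, Complex.sub_re,
      Complex.sub_im, Complex.neg_re, Complex.neg_im, Complex.one_re, Complex.one_im,
      Complex.I_re, Complex.I_im, Complex.ofReal_re, Complex.ofReal_im, Complex.conj_re,
      Complex.conj_im, Complex.div_re, Complex.div_im, Complex.normSq_apply, Complex.zero_re,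
      Complex.zero_im, Complex.re_ofNat, Complex.im_ofNat, pow_two]
    linear_combination hr
  · rw [show ∀ h' : (2:ℕ) < 7, Xfield ⟨2, h'⟩ (z1, z2, w) = (I * z1, 2 * I * z2, 0) from
      fun _ => rfl]
    simp only [Complex.add_re, Complex.add_im, Complex.mul_re, Complex.mul_im, Complex.sub_re,
      Complex.sub_im, Complex.neg_re, Complex.neg_im, Complex.one_re, Complex.one_im,
      Complex.I_re, Complex.I_im, Complex.ofReal_re, Complex.ofReal_im, Complex.conj_re,
      Complex.conj_im, Complex.div_re, Complex.div_im, Complex.normSq_apply, Complex.zero_re,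
      Complex.zero_im, Complex.re_ofNat, Complex.im_ofNat, pow_two]
    ring
  · rw [show ∀ h' : (3:ℕ) < 7, Xfield ⟨3, h'⟩ (z1, z2, w) = (z2 - 1, 0, -2 * z1) from
      fun _ => rfl]
    simp only [Complex.add_re, Complex.add_im, Complex.mul_re, Complex.mul_im, Complex.sub_re,
      Complex.sub_im, Complex.neg_re, Complex.neg_im, Complex.one_re, Complex.one_im,
      Complex.I_re, Complex.I_im, Complex.ofReal_re, Complex.ofReal_im, Complex.conj_re,
      Complex.conj_im, Complex.div_re, Complex.div_im, Complex.normSq_apply, Complex.zero_re,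
      Complex.zero_im, Complex.re_ofNat, Complex.im_ofNat, pow_two]
    ring
  · rw [show ∀ h' : (4:ℕ) < 7, Xfield ⟨4, h'⟩ (z1, z2, w) = (I + I * z2, 0, -2 * I * z1) from
      fun _ => rfl]
    simp only [Complex.add_re, Complex.add_im, Complex.mul_re, Complex.mul_im, Complex.sub_re,
      Complex.sub_im, Complex.neg_re, Complex.neg_im, Complex.one_re, Complex.one_im,
      Complex.I_re, Complex.I_im, Complex.ofReal_re, Complex.ofReal_im, Complex.conj_re,
      Complex.conj_im, Complex.div_re, Complex.div_im, Complex.normSq_apply, Complex.zero_re,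
      Complex.zero_im, Complex.re_ofNat, Complex.im_ofNat, pow_two]
    ring
  · rw [show ∀ h' : (5:ℕ) < 7, Xfield ⟨5, h'⟩ (z1, z2, w) = (z1 * z2, z2 ^ 2 - 1, -z1 ^ 2) from
      fun _ => rfl]
    simp only [Complex.add_re, Complex.add_im, Complex.mul_re, Complex.mul_im, Complex.sub_re,
      Complex.sub_im, Complex.neg_re, Complex.neg_im, Complex.one_re, Complex.one_im,
      Complex.I_re, Complex.I_im, Complex.ofReal_re, Complex.ofReal_im, Complex.conj_re,
      Complex.conj_im, Complex.div_re, Complex.div_im, Complex.normSq_apply, Complex.zero_re,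
      Complex.zero_im, Complex.re_ofNat, Complex.im_ofNat, pow_two]
    linear_combination z2.re * hr
  · rw [show ∀ h' : (6:ℕ) < 7,
        Xfield ⟨6, h'⟩ (z1, z2, w) = (I * z1 * z2, I * z2 ^ 2 + I, -I * z1 ^ 2) from
      fun _ => rfl]
    simp only [Complex.add_re, Complex.add_im, Complex.mul_re, Complex.mul_im, Complex.sub_re,
      Complex.sub_im, Complex.neg_re, Complex.neg_im, Complex.one_re, Complex.one_im,
      Complex.I_re, Complex.I_im, Complex.ofReal_re, Complex.ofReal_im, Complex.conj_re,
      Complex.conj_im, Complex.div_re, Complex.div_im, Complex.normSq_apply, Complex.zero_re,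
      Complex.zero_im, Complex.re_ofNat, Complex.im_ofNat, pow_two]
    linear_combination (-z2.im) * hr
end
end

section
/- The flow of the vector field X⁶ is explicit: let p = (p₁, p₂, p₃) ∈ ℂ³ with p₂ ≠ 1, and set D(t) := (1 + p₂) + (1 − p₂)e^{2t}. Define γ by γ(t) = ( 2p₁e^t / D(t), ((1 + p₂) − (1 − p₂)e^{2t}) / D(t), p₃ − p₁²/(1 − p₂) + 2p₁²/((1 − p₂)·D(t)) ). Then γ(0) = p, and at every t ∈ ℝ with D(t) ≠ 0 the curve γ is differentiable with γ′(t) = X⁶(γ(t)). -/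
/-!
Substituting `u = eᵗ` (so `u' = u` and `e^{2t} = u²`) makes `γ` a rational function of `u`.
For any constants `a, b ≠ 0, c, e`, the quotient rule alone shows that the curve
`(2cu/D, (a − bu²)/D, e + 2c²/(bD))` with `D = a + bu²` is an integral curve of `X⁶`;
the choice `a + b = 2` makes it pass through `p` at `u = 1`.
-/

open Complex

noncomputable section

/-- The holomorphic vector field `X⁶ = (z₁ z₂, z₂² − 1, −z₁²)` on `ℂ³`. -/
def X6 : ℂ × ℂ × ℂ → ℂ × ℂ × ℂ := fun p => (p.1 * p.2.1, p.2.1 ^ 2 - 1, -p.1 ^ 2)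

/-- With `u = eᵗ`, `a = 1 + p₂`, `b = 1 − p₂`, `c = p₁` and `e = p₃ − p₁²/(1 − p₂)`
this is the paper's `γ(t)`, and `a + b u²` is its `D(t)`. -/
def x6Curve (a b c e u : ℂ) : ℂ × ℂ × ℂ :=
  (2 * c * u / (a + b * u ^ 2), (a - b * u ^ 2) / (a + b * u ^ 2),
    e + 2 * c ^ 2 / (b * (a + b * u ^ 2)))

theorem hasDerivAt_x6Curve {u : ℝ → ℂ} {t : ℝ} (a b c e : ℂ) (hb : b ≠ 0)
    (hu : HasDerivAt u (u t) t) (hD : a + b * u t ^ 2 ≠ 0) :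
    HasDerivAt (fun s => x6Curve a b c e (u s)) (X6 (x6Curve a b c e (u t))) t := by
  have hsq : HasDerivAt (fun s => u s ^ 2) (2 * u t ^ 2) t :=
    (hu.fun_pow 2).congr_deriv (by ring)
  have hden : HasDerivAt (fun s => a + b * u s ^ 2) (b * (2 * u t ^ 2)) t :=
    (hsq.const_mul b).const_add a
  have hnum : HasDerivAt (fun s => a - b * u s ^ 2) (-(b * (2 * u t ^ 2))) t :=
    (hsq.const_mul b).const_sub a
  have h₁ := (hu.const_mul (2 * c)).div hden hD
  have h₂ := hnum.div hden hD
  have h₃ := ((hasDerivAt_const t (2 * c ^ 2)).div (hden.const_mul b)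
    (mul_ne_zero hb hD)).const_add e
  refine (h₁.prodMk (h₂.prodMk h₃)).congr_deriv ?_
  simp only [x6Curve, X6, Prod.mk.injEq]
  refine ⟨?_, ?_, ?_⟩ <;> field_simp <;> ring

theorem x6Curve_one (a b c e : ℂ) (hb : b ≠ 0) (hab : a + b = 2) :
    x6Curve a b c e 1 = (c, a - 1, e + c ^ 2 / b) := by
  obtain rfl : a = 2 - b := by linear_combination hab
  simp only [x6Curve, one_pow, mul_one, sub_add_cancel, Prod.mk.injEq]
  refine ⟨?_, ?_, ?_⟩
  · field_simp
  · field_simp; ring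
  · field_simp

/-- The explicit flow of `X⁶`: for `p ∈ ℂ³` with `p₂ ≠ 1`, setting
`D(t) = (1 + p₂) + (1 − p₂)e^{2t}`, the curve
`γ(t) = (2p₁eᵗ/D(t), ((1 + p₂) − (1 − p₂)e^{2t})/D(t), p₃ − p₁²/(1 − p₂) + 2p₁²/((1 − p₂)D(t)))`
starts at `p` and is an integral curve of `X⁶` wherever `D(t) ≠ 0`. -/
theorem X6_flow (p : ℂ × ℂ × ℂ) (hp : p.2.1 ≠ 1) (D : ℝ → ℂ)
    (hD : D = fun t : ℝ => (1 + p.2.1) + (1 - p.2.1) * (Real.exp (2 * t) : ℂ))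
    (γ : ℝ → ℂ × ℂ × ℂ)
    (hγ : γ = fun t : ℝ =>
      (2 * p.1 * (Real.exp t : ℂ) / D t,
        ((1 + p.2.1) - (1 - p.2.1) * (Real.exp (2 * t) : ℂ)) / D t,
        p.2.2 - p.1 ^ 2 / (1 - p.2.1) + 2 * p.1 ^ 2 / ((1 - p.2.1) * D t))) :
    γ 0 = p ∧ ∀ t : ℝ, D t ≠ 0 → HasDerivAt γ (X6 (γ t)) t := by
  have hb : (1 : ℂ) - p.2.1 ≠ 0 := sub_ne_zero.mpr hp.symm
  have hexp (t : ℝ) : ((Real.exp (2 * t) : ℝ) : ℂ) = (Real.exp t : ℂ) ^ 2 := by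
    rw [two_mul, Real.exp_add]; push_cast; ring
  have hDu : D = fun t => (1 + p.2.1) + (1 - p.2.1) * (Real.exp t : ℂ) ^ 2 := by
    simp only [hD, hexp]
  have hγu : γ = fun t => x6Curve (1 + p.2.1) (1 - p.2.1) p.1 (p.2.2 - p.1 ^ 2 / (1 - p.2.1))
      (Real.exp t) := by
    simp only [hγ, hDu, hexp, x6Curve]
  simp only [hγu, hDu]
  refine ⟨?_, fun t hDt => hasDerivAt_x6Curve _ _ _ _ hb ?_ hDt⟩
  · rw [Real.exp_zero, ofReal_one, x6Curve_one _ _ _ _ hb (by ring)]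
    simp only [add_sub_cancel_left, sub_add_cancel]
  · exact (Real.hasDerivAt_exp t).ofReal_comp
end
end

section
/- The flow of the vector field X⁷ is explicit: let p = (p₁, p₂, p₃) ∈ ℂ³ and set D(t) := p₂·sinh(t) + i·cosh(t). Define γ by γ(t) = ( i p₁ / D(t), (i p₂ cosh(t) − sinh(t)) / D(t), p₃ + p₁²·sinh(t)/D(t) ). Then γ(0) = p, and at every t ∈ ℝ with D(t) ≠ 0 the curve γ is differentiable with γ′(t) = X⁷(γ(t)). -/
/-!
Write `D = p₂ sinh + i cosh` and `D' = i sinh + p₂ cosh`, so that `D'` is the derivative of `D`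
and `D` that of `D'`. Then `γ = (i p₁ / D, i D'/D, p₃ + p₁² sinh / D)`: the quotient `D'/D` solves
the Riccati equation `u' = 1 - u²`, which gives the second component, the first follows from
`(1/D)' = -(1/D)(D'/D)`, and the third from the constant Wronskian `cosh · D - sinh · D' = i`.
-/

open Complex

noncomputable section

def X7 : ℂ × ℂ × ℂ → ℂ × ℂ × ℂ := fun p => (I * p.1 * p.2.1, I * p.2.1 ^ 2 + I, -I * p.1 ^ 2)

theorem HasDerivAt.div_riccati {𝕜 𝕜' : Type*} [NontriviallyNormedField 𝕜]
    [NontriviallyNormedField 𝕜'] [NormedAlgebra 𝕜 𝕜'] {f f' : 𝕜 → 𝕜'} {x : 𝕜}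
    (hf : HasDerivAt f (f' x) x) (hf' : HasDerivAt f' (f x) x) (hx : f x ≠ 0) :
    HasDerivAt (fun y => f' y / f y) (1 - (f' x / f x) ^ 2) x :=
  (hf'.div hf hx).congr_deriv (by field_simp)

def sinhCoshComb (α β : ℂ) (t : ℝ) : ℂ := α * Real.sinh t + β * Real.cosh t

theorem hasDerivAt_sinhCoshComb (α β : ℂ) (t : ℝ) :
    HasDerivAt (sinhCoshComb α β) (sinhCoshComb β α t) t :=
  (((Real.hasDerivAt_sinh t).ofReal_comp.const_mul α).add
    ((Real.hasDerivAt_cosh t).ofReal_comp.const_mul β)).congr_deriv (add_comm _ _)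

theorem cosh_mul_sinhCoshComb_sub_sinh_mul (α β : ℂ) (t : ℝ) :
    Real.cosh t * sinhCoshComb α β t - Real.sinh t * sinhCoshComb β α t = β := by
  have h : (Real.cosh t : ℂ) ^ 2 - (Real.sinh t : ℂ) ^ 2 = 1 := by
    exact_mod_cast Real.cosh_sq_sub_sinh_sq t
  unfold sinhCoshComb
  linear_combination β * h

/-- The explicit flow of `X⁷`: for `p ∈ ℂ³`, setting `D(t) = p₂ sinh t + i cosh t`, the curve
`γ(t) = (i p₁/D(t), (i p₂ cosh t − sinh t)/D(t), p₃ + p₁² sinh t / D(t))`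
starts at `p` and is an integral curve of `X⁷` wherever `D(t) ≠ 0`. -/
theorem X7_flow (p : ℂ × ℂ × ℂ) (D : ℝ → ℂ)
    (hD : D = fun t : ℝ => p.2.1 * (Real.sinh t : ℂ) + I * (Real.cosh t : ℂ))
    (γ : ℝ → ℂ × ℂ × ℂ)
    (hγ : γ = fun t : ℝ =>
      (I * p.1 / D t,
        (I * p.2.1 * (Real.cosh t : ℂ) - (Real.sinh t : ℂ)) / D t,
        p.2.2 + p.1 ^ 2 * (Real.sinh t : ℂ) / D t)) :
    γ 0 = p ∧ ∀ t : ℝ, D t ≠ 0 → HasDerivAt γ (X7 (γ t)) t := by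
  obtain ⟨a, b, c⟩ := p
  obtain ⟨D', hD'⟩ : ∃ D', D' = sinhCoshComb I b := ⟨_, rfl⟩
  replace hD : D = sinhCoshComb b I := hD
  have hD_deriv (t : ℝ) : HasDerivAt D (D' t) t := hD ▸ hD' ▸ hasDerivAt_sinhCoshComb b I t
  have hD'_deriv (t : ℝ) : HasDerivAt D' (D t) t := hD ▸ hD' ▸ hasDerivAt_sinhCoshComb I b t
  have hW (t : ℝ) : Real.cosh t * D t - Real.sinh t * D' t = I :=
    hD ▸ hD' ▸ cosh_mul_sinhCoshComb_sub_sinh_mul b I t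
  have hnum (t : ℝ) : I * b * Real.cosh t - Real.sinh t = I * D' t := by
    rw [hD', sinhCoshComb]
    linear_combination (-(Real.sinh t : ℂ)) * I_sq
  have hγ' : γ = fun t => (I * (a / D t), I * (D' t / D t), c + a ^ 2 * (Real.sinh t / D t)) := by
    simp only [hγ, hnum, mul_div_assoc]
  subst hγ'
  refine ⟨?_, fun t ht => ?_⟩
  · have hD0 : D 0 = I := by simp [hD, sinhCoshComb]
    have hD'0 : D' 0 = b := by simp [hD', sinhCoshComb]
    simp only [hD0, hD'0, mul_div_cancel₀ _ I_ne_zero, Real.sinh_zero, ofReal_zero, zero_div,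
      mul_zero, add_zero]
  · have h1 := ((hasDerivAt_const t a).div (hD_deriv t) ht).const_mul I
    have h2 := ((hD_deriv t).div_riccati (hD'_deriv t) ht).const_mul I
    have h3 := (((Real.hasDerivAt_sinh t).ofReal_comp.div (hD_deriv t) ht).const_mul
      (a ^ 2)).const_add c
    rw [hW] at h3
    refine (h1.prodMk (h2.prodMk h3)).congr_deriv ?_
    simp only [X7, Prod.mk.injEq]
    refine ⟨?_, ?_, ?_⟩
    · field_simp
      linear_combination (-a * D' t) * I_sq
    · linear_combination (-I * (D' t / D t) ^ 2) * I_sq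
    · field_simp
      linear_combination a ^ 2 * I_sq
end
end

section
/- For every t ∈ ℝ, the rigid holomorphic map φ_t(z₁, z₂, w) = (z₁ + (z₂ − 1)t, z₂, w − (z₂ − 1)t² − 2z₁t) maps M_LC into M_LC: if (z₁, z₂, w) ∈ M_LC then φ_t(z₁, z₂, w) ∈ M_LC. -/
open Complex ComplexConjugate

noncomputable section

/-- For every `t ∈ ℝ`, the rigid holomorphic map
`φ_t(z₁, z₂, w) = (z₁ + (z₂ − 1)t, z₂, w − (z₂ − 1)t² − 2z₁t)` maps `M_LC` into `M_LC`. -/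
theorem rigid_flow_X4_maps_MLC (t : ℝ) (p : ℂ × ℂ × ℂ) (hp : p ∈ MLC) :
    (p.1 + (p.2.1 - 1) * (t : ℂ), p.2.1,
      p.2.2 - (p.2.1 - 1) * (t : ℂ) ^ 2 - 2 * p.1 * (t : ℂ)) ∈ MLC := by
  obtain ⟨h1, h2⟩ := hp
  refine ⟨h1, ?_⟩
  obtain ⟨⟨x, y⟩, ⟨a, b⟩, ⟨u, v⟩⟩ := p
  simp only [pow_two] at h2 ⊢
  simp only [Complex.ext_iff, Complex.mul_re, Complex.mul_im, Complex.add_re, Complex.add_im,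
    Complex.sub_re, Complex.sub_im, Complex.one_re, Complex.one_im, Complex.ofReal_re,
    Complex.ofReal_im, Complex.conj_re, Complex.conj_im, Complex.re_ofNat, Complex.im_ofNat] at h2 ⊢
  obtain ⟨h2a, h2b⟩ := h2
  constructor <;> · ring_nf at h2a h2b ⊢ <;> linarith
end
end

section
/- For every t ∈ ℝ, the rigid holomorphic map φ_t(z₁, z₂, w) = (z₁ + i(1 + z₂)t, z₂, w − 2iz₁t + (1 + z₂)t²) maps M_LC into M_LC: if (z₁, z₂, w) ∈ M_LC then φ_t(z₁, z₂, w) ∈ M_LC. -/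
open Complex ComplexConjugate

noncomputable section

/-- For every `t ∈ ℝ`, the rigid holomorphic map
`φ_t(z₁, z₂, w) = (z₁ + i(1 + z₂)t, z₂, w − 2iz₁t + (1 + z₂)t²)` maps `M_LC` into `M_LC`. -/
theorem rigid_flow_X5_maps_MLC (t : ℝ) (p : ℂ × ℂ × ℂ) (hp : p ∈ MLC) :
    (p.1 + I * (1 + p.2.1) * (t : ℂ), p.2.1,
      p.2.2 - 2 * I * p.1 * (t : ℂ) + (1 + p.2.1) * (t : ℂ) ^ 2) ∈ MLC := by
  obtain ⟨h1, h2⟩ := hp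
  refine ⟨h1, ?_⟩
  obtain ⟨a, b⟩ := p
  obtain ⟨c, w⟩ := b
  simp only [Complex.ext_iff, Complex.add_re, Complex.add_im, Complex.sub_re, Complex.sub_im,
    Complex.mul_re, Complex.mul_im, Complex.one_re, Complex.one_im, Complex.I_re, Complex.I_im,
    Complex.ofReal_re, Complex.ofReal_im, Complex.conj_re, Complex.conj_im,
    Complex.re_ofNat, Complex.im_ofNat,
    pow_two, Complex.neg_re, Complex.neg_im] at h2 ⊢
  obtain ⟨h2a, h2b⟩ := h2
  refine ⟨by linear_combination h2a, by ring⟩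
end
end

section
/- For every t ∈ ℝ and every (z₁, z₂, w) ∈ M_LC such that D := (1 + z₂) + (1 − z₂)e^{2t} ≠ 0, the rigid holomorphic map φ_t(z₁, z₂, w) = ( 2z₁e^t/D, ((1 + z₂) − (1 − z₂)e^{2t})/D, w − z₁²/(1 − z₂) + 2z₁²/((1 − z₂)·D) ) satisfies φ_t(z₁, z₂, w) ∈ M_LC. (Note that z₂ ≠ 1 automatically, since z₂·conj(z₂) ≠ 1 on M_LC.) -/
open Complex ComplexConjugate

noncomputable section

/-! With `e = eᵗ` and `D = (1 + z₂) + (1 − z₂)e²`, the map `φ_t` rescales both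
`1 − |z₂|²` and the defining function `ρ = Re w (1 − |z₂|²) − |z₁|² − Re (z₁² z̄₂)` of `M_LC`
by the same factor `4e²/|D|²`, which is nonzero. Both identities are checked by writing real
parts and moduli through `conj`: since `e` is real, `conj` commutes with `φ_t`, so after
clearing denominators they become polynomial identities in `z₁, z₂, w` and their conjugates. -/

def flowDenom (e : ℝ) (s : ℂ) : ℂ := (1 + s) + (1 - s) * (e : ℂ) ^ 2

theorem conj_flowDenom (e : ℝ) (s : ℂ) : conj (flowDenom e s) = flowDenom e (conj s) := by
  simp [flowDenom]

def flowX6 (e : ℝ) (p : ℂ × ℂ × ℂ) : ℂ × ℂ × ℂ :=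
  (2 * p.1 * e / flowDenom e p.2.1,
    ((1 + p.2.1) - (1 - p.2.1) * (e : ℂ) ^ 2) / flowDenom e p.2.1,
    p.2.2 - p.1 ^ 2 / (1 - p.2.1) + 2 * p.1 ^ 2 / ((1 - p.2.1) * flowDenom e p.2.1))

theorem flowX6_snd_snd (e : ℝ) (p : ℂ × ℂ × ℂ) (hs : p.2.1 ≠ 1) (hD : flowDenom e p.2.1 ≠ 0) :
    (flowX6 e p).2.2 = p.2.2 + p.1 ^ 2 * (1 - e ^ 2) / flowDenom e p.2.1 := by
  have hs' : 1 - p.2.1 ≠ 0 := sub_ne_zero.mpr hs.symm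
  simp only [flowX6]
  field_simp
  simp only [flowDenom]
  ring

theorem one_sub_normSq_flowX6_snd_fst (e : ℝ) (p : ℂ × ℂ × ℂ) (hD : flowDenom e p.2.1 ≠ 0) :
    1 - normSq (flowX6 e p).2.1
      = 4 * e ^ 2 * (1 - normSq p.2.1) / normSq (flowDenom e p.2.1) := by
  have hD' : flowDenom e (conj p.2.1) ≠ 0 := by rwa [← conj_flowDenom, map_ne_zero]
  apply ofReal_injective
  simp only [flowX6, ofReal_sub, ofReal_one, ofReal_div, ofReal_mul, ofReal_pow, ofReal_ofNat,
    normSq_eq_conj_mul_self, map_div₀, map_sub, map_add, map_mul, map_one, map_pow, conj_ofReal,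
    conj_flowDenom]
  field_simp
  simp only [flowDenom]
  ring

namespace MLC

def definingFunction (p : ℂ × ℂ × ℂ) : ℝ :=
  p.2.2.re * (1 - normSq p.2.1) - normSq p.1 - (p.1 ^ 2 * conj p.2.1).re

theorem mem_iff (p : ℂ × ℂ × ℂ) :
    p ∈ MLC ↔ normSq p.2.1 ≠ 1 ∧ definingFunction p = 0 := by
  simp only [MLC, Set.mem_ofPred_eq, mul_conj, definingFunction, sub_sub, sub_eq_zero]
  exact_mod_cast Iff.rfl

theorem definingFunction_flowX6 (e : ℝ) (p : ℂ × ℂ × ℂ) (hs : p.2.1 ≠ 1)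
    (hD : flowDenom e p.2.1 ≠ 0) :
    definingFunction (flowX6 e p)
      = 4 * e ^ 2 / normSq (flowDenom e p.2.1) * definingFunction p := by
  obtain ⟨z, s, w⟩ := p
  have hD' : flowDenom e (conj s) ≠ 0 := by rwa [← conj_flowDenom, map_ne_zero]
  simp only [definingFunction, flowX6_snd_snd e (z, s, w) hs hD]
  simp only [flowX6]
  apply ofReal_injective
  simp only [ofReal_sub, ofReal_one, ofReal_div, ofReal_mul, ofReal_pow, ofReal_ofNat,
    normSq_eq_conj_mul_self, re_eq_add_conj, map_div₀, map_sub, map_add, map_mul, map_one,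
    map_pow, conj_ofReal, map_ofNat, conj_conj, conj_flowDenom]
  field_simp
  simp only [flowDenom]
  ring

theorem flowX6_mem {e : ℝ} (he : e ≠ 0) {p : ℂ × ℂ × ℂ} (hp : p ∈ MLC)
    (hD : flowDenom e p.2.1 ≠ 0) : flowX6 e p ∈ MLC := by
  rw [mem_iff] at hp ⊢
  obtain ⟨hs, hρ⟩ := hp
  have hs1 : p.2.1 ≠ 1 := by
    rintro h
    simp [h] at hs
  refine ⟨fun h ↦ ?_, by rw [definingFunction_flowX6 e p hs1 hD, hρ, mul_zero]⟩
  have hscale := one_sub_normSq_flowX6_snd_fst e p hD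
  rw [h, sub_self, eq_comm] at hscale
  have hDsq : normSq (flowDenom e p.2.1) ≠ 0 := normSq_eq_zero.not.mpr hD
  exact div_ne_zero (mul_ne_zero (by positivity) (sub_ne_zero.mpr hs.symm)) hDsq hscale

end MLC

/-- For every `t ∈ ℝ` and `(z₁, z₂, w) ∈ M_LC` with `D = (1 + z₂) + (1 − z₂)e^{2t} ≠ 0`, the
rigid holomorphic map
`φ_t(z₁, z₂, w) = (2z₁eᵗ/D, ((1 + z₂) − (1 − z₂)e^{2t})/D, w − z₁²/(1 − z₂) + 2z₁²/((1 − z₂)D))`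
sends the point into `M_LC` again. -/
theorem rigid_flow_X6_maps_MLC (t : ℝ) (p : ℂ × ℂ × ℂ) (hp : p ∈ MLC)
    (hD : (1 + p.2.1) + (1 - p.2.1) * (Real.exp (2 * t) : ℂ) ≠ 0) :
    (2 * p.1 * (Real.exp t : ℂ) / ((1 + p.2.1) + (1 - p.2.1) * (Real.exp (2 * t) : ℂ)),
      ((1 + p.2.1) - (1 - p.2.1) * (Real.exp (2 * t) : ℂ))
        / ((1 + p.2.1) + (1 - p.2.1) * (Real.exp (2 * t) : ℂ)),
      p.2.2 - p.1 ^ 2 / (1 - p.2.1)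
        + 2 * p.1 ^ 2 / ((1 - p.2.1) * ((1 + p.2.1) + (1 - p.2.1) * (Real.exp (2 * t) : ℂ))))
      ∈ MLC := by
  have hexp : (Real.exp (2 * t) : ℂ) = (Real.exp t : ℂ) ^ 2 := by
    rw [two_mul, Real.exp_add]
    push_cast
    ring
  rw [hexp] at hD ⊢
  exact MLC.flowX6_mem (Real.exp_ne_zero t) hp hD
end
end

section
/- (Lemma 2.7, first identity.) In the polarized setting, if F is holomorphic on the open set Ω ⊆ ℂ⁴, F_{z₁ζ₁} vanishes nowhere on Ω, and the constant Levi rank 1 identity F_{z₁ζ₁}F_{z₂ζ₂} − F_{z₂ζ₁}F_{z₁ζ₂} ≡ 0 holds on Ω, then 𝒦(k̄) ≡ 0 on Ω, i.e. k·∂_{z₁}(k̄) + ∂_{z₂}(k̄) = 0, where k := −F_{z₂ζ₁}/F_{z₁ζ₁} and k̄ := −F_{z₁ζ₂}/F_{z₁ζ₁}. -/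
open Complex

noncomputable section

/-- Partial derivative with respect to `z₁`, the first coordinate of `(z₁, z₂, ζ₁, ζ₂) ∈ ℂ⁴`. -/
def pz1 (G : ℂ × ℂ × ℂ × ℂ → ℂ) (q : ℂ × ℂ × ℂ × ℂ) : ℂ :=
  deriv (fun s => G (s, q.2.1, q.2.2.1, q.2.2.2)) q.1

/-- Partial derivative with respect to `z₂`. -/
def pz2 (G : ℂ × ℂ × ℂ × ℂ → ℂ) (q : ℂ × ℂ × ℂ × ℂ) : ℂ :=
  deriv (fun s => G (q.1, s, q.2.2.1, q.2.2.2)) q.2.1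

/-- Partial derivative with respect to `ζ₁`. -/
def pc1 (G : ℂ × ℂ × ℂ × ℂ → ℂ) (q : ℂ × ℂ × ℂ × ℂ) : ℂ :=
  deriv (fun s => G (q.1, q.2.1, s, q.2.2.2)) q.2.2.1

/-- Partial derivative with respect to `ζ₂`. -/
def pc2 (G : ℂ × ℂ × ℂ × ℂ → ℂ) (q : ℂ × ℂ × ℂ × ℂ) : ℂ :=
  deriv (fun s => G (q.1, q.2.1, q.2.2.1, s)) q.2.2.2

/-! Write `a, b, c, d` for `F_{z₁ζ₁}, F_{z₂ζ₁}, F_{z₁ζ₂}, F_{z₂ζ₂}`, so that `k = -b/a` and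
`k̄ = -c/a`. Symmetry of mixed partials of the holomorphic `F` gives `∂_{z₂} a = ∂_{z₁} b` and
`∂_{z₂} c = ∂_{z₁} d`, and after these substitutions
`a³ 𝒦(k̄) = -a ∂_{z₁}(ad - bc) + (∂_{z₁} a)(ad - bc)`,
where both terms vanish because the Levi determinant `ad - bc` vanishes on the open set `Ω`. -/

open Filter Topology

section IsDerivAlong

variable {𝕜 E : Type*} [NontriviallyNormedField 𝕜] [NormedAddCommGroup E] [NormedSpace 𝕜 E]

/-- Abstracts the coordinate partials `pz1`, `pz2`, `pc1`, `pc2`, so that their calculus is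
developed once. -/
def IsDerivAlong (P : (E → 𝕜) → E → 𝕜) (v : E) : Prop :=
  ∀ (G : E → 𝕜) (p : E), DifferentiableAt 𝕜 G p → P G p = fderiv 𝕜 G p v

namespace IsDerivAlong

variable {P Q R : (E → 𝕜) → E → 𝕜} {u v w : E} {f g G : E → 𝕜} {p : E}

theorem neg (hP : IsDerivAlong P v) (hf : DifferentiableAt 𝕜 f p) :
    P (fun x => -f x) p = -P f p := by
  rw [hP (fun x => -f x) p hf.neg, hP _ _ hf, fderiv_fun_neg]
  rfl

theorem sub (hP : IsDerivAlong P v) (hf : DifferentiableAt 𝕜 f p) (hg : DifferentiableAt 𝕜 g p) :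
    P (fun x => f x - g x) p = P f p - P g p := by
  rw [hP (fun x => f x - g x) p (hf.sub hg), hP _ _ hf, hP _ _ hg, fderiv_fun_sub hf hg]
  rfl

theorem mul (hP : IsDerivAlong P v) (hf : DifferentiableAt 𝕜 f p) (hg : DifferentiableAt 𝕜 g p) :
    P (fun x => f x * g x) p = f p * P g p + P f p * g p := by
  rw [hP (fun x => f x * g x) p (hf.mul hg), hP _ _ hf, hP _ _ hg, fderiv_fun_mul hf hg]
  simp only [add_apply, smul_apply, smul_eq_mul, mul_comm]

theorem inv (hP : IsDerivAlong P v) (hg : DifferentiableAt 𝕜 g p) (hgp : g p ≠ 0) :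
    P (fun x => (g x)⁻¹) p = -P g p / g p ^ 2 := by
  rw [hP (fun x => (g x)⁻¹) p (hg.inv hgp), hP _ _ hg]
  have := ((hasFDerivAt_inv hgp).comp p hg.hasFDerivAt).fderiv
  rw [show (fun x => (g x)⁻¹) = (fun y => y⁻¹) ∘ g from rfl, this]
  simp only [ContinuousLinearMap.comp_apply, ContinuousLinearMap.toSpanSingleton_apply, smul_eq_mul,
    mul_neg]
  ring

theorem div (hP : IsDerivAlong P v) (hf : DifferentiableAt 𝕜 f p) (hg : DifferentiableAt 𝕜 g p)
    (hgp : g p ≠ 0) :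
    P (fun x => f x / g x) p = (P f p * g p - f p * P g p) / g p ^ 2 := by
  simp only [div_eq_mul_inv]
  rw [hP.mul (g := fun x => (g x)⁻¹) hf (hg.inv hgp), hP.inv hg hgp]
  field_simp
  ring

theorem eq_zero_of_eventuallyEq_zero (hP : IsDerivAlong P v) (hf : f =ᶠ[𝓝 p] fun _ => 0) :
    P f p = 0 := by
  rw [hP _ _ ((differentiableAt_const (0 : 𝕜)).congr_of_eventuallyEq hf), hf.fderiv_eq,
    fderiv_const_apply, zero_apply]

theorem congr_of_eventuallyEq (hP : IsDerivAlong P v) (hf : DifferentiableAt 𝕜 f p)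
    (h : f =ᶠ[𝓝 p] g) : P f p = P g p := by
  rw [hP _ _ hf, hP _ _ (hf.congr_of_eventuallyEq h.symm), h.fderiv_eq]

theorem ratio_annihilated_of_det_eq_zero (hP : IsDerivAlong P v) (hQ : IsDerivAlong Q w)
    {a b c d : E → 𝕜} (ha : DifferentiableAt 𝕜 a p) (hb : DifferentiableAt 𝕜 b p)
    (hc : DifferentiableAt 𝕜 c p) (hd : DifferentiableAt 𝕜 d p)
    (hdet : ∀ᶠ x in 𝓝 p, a x * d x - b x * c x = 0) (hab : Q a p = P b p) (hcd : Q c p = P d p)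
    (hap : a p ≠ 0) :
    -(b p) / a p * P (fun x => -(c x) / a x) p + Q (fun x => -(c x) / a x) p = 0 := by
  have hdet' : a p * P d p + P a p * d p - (b p * P c p + P b p * c p) = 0 := by
    rw [← hP.mul ha hd, ← hP.mul hb hc, ← hP.sub (f := fun x => a x * d x) (g := fun x => b x * c x)
      (ha.mul hd) (hb.mul hc)]
    exact hP.eq_zero_of_eventuallyEq_zero hdet
  rw [hP.div (f := fun x => -c x) hc.neg ha hap, hQ.div (f := fun x => -c x) hc.neg ha hap,
    hP.neg hc, hQ.neg hc, hab, hcd]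
  field_simp
  linear_combination (-a p) * hdet' + P a p * hdet.self_of_nhds

variable [CompleteSpace 𝕜]

theorem eventuallyEq (hP : IsDerivAlong P v) (hG : AnalyticAt 𝕜 G p) :
    P G =ᶠ[𝓝 p] fun x => fderiv 𝕜 G x v :=
  hG.eventually_analyticAt.mono fun x hx => hP G x hx.differentiableAt

theorem analyticAt (hP : IsDerivAlong P v) (hG : AnalyticAt 𝕜 G p) : AnalyticAt 𝕜 (P G) p :=
  ((ContinuousLinearMap.apply 𝕜 𝕜 v).analyticAt _ |>.comp hG.fderiv).congr (hP.eventuallyEq hG).symm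

theorem analyticOnNhd {U : Set E} (hP : IsDerivAlong P v) (hG : AnalyticOnNhd 𝕜 G U) :
    AnalyticOnNhd 𝕜 (P G) U :=
  fun p hp => hP.analyticAt (hG p hp)

theorem apply_apply_eq (hP : IsDerivAlong P v) (hQ : IsDerivAlong Q w) (hG : AnalyticAt 𝕜 G p) :
    P (Q G) p = fderiv 𝕜 (fderiv 𝕜 G) p v w := by
  have hG' : DifferentiableAt 𝕜 (fderiv 𝕜 G) p := hG.fderiv.differentiableAt
  rw [hP.congr_of_eventuallyEq (hQ.analyticAt hG).differentiableAt (hQ.eventuallyEq hG),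
    hP _ _ (hG'.clm_apply (differentiableAt_const w)),
    fderiv_clm_apply hG' (differentiableAt_const w)]
  simp only [fderiv_fun_const, Pi.zero_apply, ContinuousLinearMap.comp_zero, zero_add,
    ContinuousLinearMap.flip_apply]

theorem comm (hP : IsDerivAlong P v) (hQ : IsDerivAlong Q w) (hG : AnalyticAt 𝕜 G p) :
    P (Q G) p = Q (P G) p := by
  rw [hP.apply_apply_eq hQ hG, hQ.apply_apply_eq hP hG,
    (hG.contDiffAt.isSymmSndFDerivAt_of_omega).eq]

theorem swap_outer (hP : IsDerivAlong P v) (hQ : IsDerivAlong Q w) (hR : IsDerivAlong R u)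
    (hG : AnalyticAt 𝕜 G p) : Q (R (P G)) p = P (R (Q G)) p :=
  calc Q (R (P G)) p = R (Q (P G)) p := hQ.comm hR (hP.analyticAt hG)
    _ = R (P (Q G)) p := hR.congr_of_eventuallyEq (hQ.analyticAt (hP.analyticAt hG)).differentiableAt
          (hG.eventually_analyticAt.mono fun _ => hQ.comm hP)
    _ = P (R (Q G)) p := (hP.comm hR (hQ.analyticAt hG)).symm

end IsDerivAlong

end IsDerivAlong

theorem isDerivAlong_pz1 : IsDerivAlong pz1 ((1, 0, 0, 0) : ℂ × ℂ × ℂ × ℂ) := fun _ q hG =>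
  (hG.hasFDerivAt.comp_hasDerivAt q.1 ((hasDerivAt_id _).prodMk (hasDerivAt_const _ _))).deriv

theorem isDerivAlong_pz2 : IsDerivAlong pz2 ((0, 1, 0, 0) : ℂ × ℂ × ℂ × ℂ) := fun _ q hG =>
  (hG.hasFDerivAt.comp_hasDerivAt q.2.1 ((hasDerivAt_const _ _).prodMk
    ((hasDerivAt_id _).prodMk (hasDerivAt_const _ _)))).deriv

theorem isDerivAlong_pc1 : IsDerivAlong pc1 ((0, 0, 1, 0) : ℂ × ℂ × ℂ × ℂ) := fun _ q hG =>
  (hG.hasFDerivAt.comp_hasDerivAt q.2.2.1 ((hasDerivAt_const _ _).prodMk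
    ((hasDerivAt_const _ _).prodMk ((hasDerivAt_id _).prodMk (hasDerivAt_const _ _))))).deriv

theorem isDerivAlong_pc2 : IsDerivAlong pc2 ((0, 0, 0, 1) : ℂ × ℂ × ℂ × ℂ) := fun _ q hG =>
  (hG.hasFDerivAt.comp_hasDerivAt q.2.2.2 ((hasDerivAt_const _ _).prodMk
    ((hasDerivAt_const _ _).prodMk ((hasDerivAt_const _ _).prodMk (hasDerivAt_id _))))).deriv

/-- Lemma 2.7, first identity: in the polarized setting, for `F` holomorphic on an open
`Ω ⊆ ℂ⁴` with nonvanishing `F_{z₁ζ₁}` and vanishing Levi determinant, one has `𝒦(k̄) ≡ 0`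
on `Ω`, where `k = −F_{z₂ζ₁}/F_{z₁ζ₁}`, `k̄ = −F_{z₁ζ₂}/F_{z₁ζ₁}` and `𝒦 = k∂_{z₁} + ∂_{z₂}`. -/
theorem K_kbar_vanishes (Ω : Set (ℂ × ℂ × ℂ × ℂ)) (hΩ : IsOpen Ω)
    (F : ℂ × ℂ × ℂ × ℂ → ℂ) (hF : AnalyticOnNhd ℂ F Ω)
    (hne : ∀ q ∈ Ω, pc1 (pz1 F) q ≠ 0)
    (hLevi : ∀ q ∈ Ω, pc1 (pz1 F) q * pc2 (pz2 F) q - pc1 (pz2 F) q * pc2 (pz1 F) q = 0)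
    (k kbar : ℂ × ℂ × ℂ × ℂ → ℂ)
    (hk : k = fun q => -(pc1 (pz2 F) q) / pc1 (pz1 F) q)
    (hkbar : kbar = fun q => -(pc2 (pz1 F) q) / pc1 (pz1 F) q) :
    ∀ q ∈ Ω, k q * pz1 kbar q + pz2 kbar q = 0 := by
  subst hk hkbar
  intro q hq
  have hdiff {P Q : (ℂ × ℂ × ℂ × ℂ → ℂ) → ℂ × ℂ × ℂ × ℂ → ℂ} {v w : ℂ × ℂ × ℂ × ℂ}
      (hP : IsDerivAlong P v) (hQ : IsDerivAlong Q w) : DifferentiableAt ℂ (P (Q F)) q :=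
    (hP.analyticAt (hQ.analyticAt (hF q hq))).differentiableAt
  exact isDerivAlong_pz1.ratio_annihilated_of_det_eq_zero isDerivAlong_pz2
    (hdiff isDerivAlong_pc1 isDerivAlong_pz1) (hdiff isDerivAlong_pc1 isDerivAlong_pz2)
    (hdiff isDerivAlong_pc2 isDerivAlong_pz1) (hdiff isDerivAlong_pc2 isDerivAlong_pz2)
    (eventually_of_mem (hΩ.mem_nhds hq) hLevi)
    (isDerivAlong_pz1.swap_outer isDerivAlong_pz2 isDerivAlong_pc1 (hF q hq))
    (isDerivAlong_pz1.swap_outer isDerivAlong_pz2 isDerivAlong_pc2 (hF q hq))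
    (hne q hq)
end
end

section
/- (Bracket identity from (2.9).) In the polarized setting with F holomorphic on Ω ⊆ ℂ⁴ and F_{z₁ζ₁} vanishing nowhere on Ω, the vector fields on Ω × ℂ satisfy [𝒦, ℒ̄₁] = −(∂_{ζ₁}k)·ℒ₁, where 𝒦 := k ℒ₁ + ℒ₂ and k := −F_{z₂ζ₁}/F_{z₁ζ₁}. -/
/-!
By the Leibniz rule, `[kℒ₁ + ℒ₂, ℒ̄₁] = -(ℒ̄₁ k) ℒ₁ + k [ℒ₁, ℒ̄₁] + [ℒ₂, ℒ̄₁]`, and `ℒ̄₁ k = ∂_{ζ₁} k`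
because `k` does not depend on `v`. Each `[ℒⱼ, ℒ̄₁]` is vertical and, by the symmetry of the mixed
partials of `F`, equals `2i F_{zⱼζ₁} ∂_v`; so the last two terms add up to
`2i (k F_{z₁ζ₁} + F_{z₂ζ₁}) ∂_v`, which vanishes by the choice of `k`.
-/

open Complex

noncomputable section

open Topology VectorField

section VectorFieldOnProd

variable {𝕜 : Type*} [NontriviallyNormedField 𝕜]
  {E F G : Type*} [NormedAddCommGroup E] [NormedSpace 𝕜 E]
  [NormedAddCommGroup F] [NormedSpace 𝕜 F] [NormedAddCommGroup G] [NormedSpace 𝕜 G]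

theorem HasFDerivAt.comp_fst {g : E → G} {g' : E →L[𝕜] G} {p : E × F}
    (hg : HasFDerivAt g g' p.1) :
    HasFDerivAt (fun q : E × F => g q.1) (g'.comp (ContinuousLinearMap.fst 𝕜 E F)) p :=
  hg.comp p hasFDerivAt_fst

theorem hasFDerivAt_prodMk_const_comp_fst (v : E) {g : E → F} {p : E × F}
    (hg : DifferentiableAt 𝕜 g p.1) :
    HasFDerivAt (fun q : E × F => (v, g q.1))
      ((0 : E × F →L[𝕜] E).prod ((fderiv 𝕜 g p.1).comp (ContinuousLinearMap.fst 𝕜 E F))) p :=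
  (hasFDerivAt_const v p).prodMk hg.hasFDerivAt.comp_fst

theorem lieBracket_prodMk_comp_fst (v w : E) {g h : E → F} {p : E × F}
    (hg : DifferentiableAt 𝕜 g p.1) (hh : DifferentiableAt 𝕜 h p.1) :
    lieBracket 𝕜 (fun q : E × F => (v, g q.1)) (fun q => (w, h q.1)) p =
      (0, fderiv 𝕜 h p.1 v - fderiv 𝕜 g p.1 w) := by
  simp only [lieBracket_eq]
  rw [(hasFDerivAt_prodMk_const_comp_fst v hg).fderiv,
    (hasFDerivAt_prodMk_const_comp_fst w hh).fderiv]
  simp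

variable [CompleteSpace F] {f : E → F} {x : E}

theorem AnalyticAt.lineDeriv_eventuallyEq_fderiv (hf : AnalyticAt 𝕜 f x) (v : E) :
    (fun y => lineDeriv 𝕜 f y v) =ᶠ[𝓝 x] fun y => fderiv 𝕜 f y v :=
  hf.eventually_analyticAt.mono fun _ hy => hy.differentiableAt.lineDeriv_eq_fderiv

theorem AnalyticAt.analyticAt_lineDeriv (hf : AnalyticAt 𝕜 f x) (v : E) :
    AnalyticAt 𝕜 (fun y => lineDeriv 𝕜 f y v) x :=
  (((ContinuousLinearMap.apply 𝕜 F v).analyticAt _).comp hf.fderiv).congr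
    (hf.lineDeriv_eventuallyEq_fderiv v).symm

theorem AnalyticAt.lineDeriv_lineDeriv (hf : AnalyticAt 𝕜 f x) (v w : E) :
    lineDeriv 𝕜 (fun y => lineDeriv 𝕜 f y v) x w = fderiv 𝕜 (fderiv 𝕜 f) x w v := by
  rw [(hf.analyticAt_lineDeriv v).differentiableAt.lineDeriv_eq_fderiv,
    (hf.lineDeriv_eventuallyEq_fderiv v).fderiv_eq,
    fderiv_clm_apply hf.fderiv.differentiableAt (differentiableAt_const v)]
  simp

theorem AnalyticAt.lineDeriv_lineDeriv_comm (hf : AnalyticAt 𝕜 f x) (v w : E) :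
    lineDeriv 𝕜 (fun y => lineDeriv 𝕜 f y v) x w =
      lineDeriv 𝕜 (fun y => lineDeriv 𝕜 f y w) x v := by
  rw [hf.lineDeriv_lineDeriv, hf.lineDeriv_lineDeriv,
    hf.contDiffAt.isSymmSndFDerivAt_of_omega w v]

/-- `ℒ₁ = rigidVectorField F (-I) e₁`, `ℒ₂ = rigidVectorField F (-I) e₂` and
`ℒ̄₁ = rigidVectorField F I e₃`, with `∂_v` the direction of the second factor. -/
def rigidVectorField (f : E → F) (a : 𝕜) (v : E) : E × F → E × F :=
  fun q => (v, a • lineDeriv 𝕜 f q.1 v)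

theorem AnalyticAt.differentiableAt_rigidVectorField {p : E × F} (hf : AnalyticAt 𝕜 f p.1)
    (a : 𝕜) (v : E) : DifferentiableAt 𝕜 (rigidVectorField f a v) p :=
  (hasFDerivAt_prodMk_const_comp_fst v
    ((hf.analyticAt_lineDeriv v).differentiableAt.const_smul a)).differentiableAt

theorem AnalyticAt.lieBracket_rigidVectorField {p : E × F} (hf : AnalyticAt 𝕜 f p.1)
    (a b : 𝕜) (v w : E) :
    lieBracket 𝕜 (rigidVectorField f a v) (rigidVectorField f b w) p =
      (0, (b - a) • lineDeriv 𝕜 (fun y => lineDeriv 𝕜 f y v) p.1 w) := by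
  have hv := (hf.analyticAt_lineDeriv v).differentiableAt
  have hw := (hf.analyticAt_lineDeriv w).differentiableAt
  unfold rigidVectorField
  rw [lieBracket_prodMk_comp_fst v w (hv.fun_const_smul a) (hw.fun_const_smul b),
    fderiv_fun_const_smul hv, fderiv_fun_const_smul hw]
  simp only [smul_apply, ← hv.lineDeriv_eq_fderiv, ← hw.lineDeriv_eq_fderiv,
    hf.lineDeriv_lineDeriv_comm w v, sub_smul]

end VectorFieldOnProd

theorem pz1_eq_lineDeriv (G : ℂ × ℂ × ℂ × ℂ → ℂ) :
    pz1 G = fun q => lineDeriv ℂ G q (1, 0, 0, 0) := by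
  funext q
  have hshift :=
    deriv_comp_add_const (f := fun s => G (s, q.2.1, q.2.2.1, q.2.2.2)) (a := q.1) (x := 0)
  rw [zero_add] at hshift
  rw [pz1, ← hshift, lineDeriv]
  congr 1; funext t; congr 1; simp [Prod.ext_iff, add_comm]

theorem pz2_eq_lineDeriv (G : ℂ × ℂ × ℂ × ℂ → ℂ) :
    pz2 G = fun q => lineDeriv ℂ G q (0, 1, 0, 0) := by
  funext q
  have hshift :=
    deriv_comp_add_const (f := fun s => G (q.1, s, q.2.2.1, q.2.2.2)) (a := q.2.1) (x := 0)
  rw [zero_add] at hshift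
  rw [pz2, ← hshift, lineDeriv]
  congr 1; funext t; congr 1; simp [Prod.ext_iff, add_comm]

theorem pc1_eq_lineDeriv (G : ℂ × ℂ × ℂ × ℂ → ℂ) :
    pc1 G = fun q => lineDeriv ℂ G q (0, 0, 1, 0) := by
  funext q
  have hshift :=
    deriv_comp_add_const (f := fun s => G (q.1, q.2.1, s, q.2.2.2)) (a := q.2.2.1) (x := 0)
  rw [zero_add] at hshift
  rw [pc1, ← hshift, lineDeriv]
  congr 1; funext t; congr 1; simp [Prod.ext_iff, add_comm]

theorem bracket_K_L1bar_general (Ω : Set (ℂ × ℂ × ℂ × ℂ))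
    (F : ℂ × ℂ × ℂ × ℂ → ℂ) (hF : AnalyticOnNhd ℂ F Ω)
    (hne : ∀ q ∈ Ω, pc1 (pz1 F) q ≠ 0)
    (k : ℂ × ℂ × ℂ × ℂ → ℂ) (hk : k = fun q => -(pc1 (pz2 F) q) / pc1 (pz1 F) q)
    (L1 L2 L1bar K : (ℂ × ℂ × ℂ × ℂ) × ℂ → (ℂ × ℂ × ℂ × ℂ) × ℂ)
    (hL1 : L1 = fun p => (((1 : ℂ), (0 : ℂ), (0 : ℂ), (0 : ℂ)), -I * pz1 F p.1))
    (hL2 : L2 = fun p => (((0 : ℂ), (1 : ℂ), (0 : ℂ), (0 : ℂ)), -I * pz2 F p.1))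
    (hL1bar : L1bar = fun p => (((0 : ℂ), (0 : ℂ), (1 : ℂ), (0 : ℂ)), I * pc1 F p.1))
    (hK : K = fun p => k p.1 • L1 p + L2 p) :
    ∀ p : (ℂ × ℂ × ℂ × ℂ) × ℂ, p.1 ∈ Ω →
      VectorField.lieBracket ℂ K L1bar p = -(pc1 k p.1) • L1 p := by
  intro p hp
  have hFp : AnalyticAt ℂ F p.1 := hF p.1 hp
  simp only [pz1_eq_lineDeriv, pz2_eq_lineDeriv, pc1_eq_lineDeriv] at hne hk hL1 hL2 hL1bar ⊢
  replace hL1 : L1 = rigidVectorField F (-I) (1, 0, 0, 0) := hL1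
  replace hL2 : L2 = rigidVectorField F (-I) (0, 1, 0, 0) := hL2
  replace hL1bar : L1bar = rigidVectorField F I (0, 0, 1, 0) := hL1bar
  replace hK : K = (fun y => k y.1 • L1 y) + L2 := hK
  subst hL1 hL2 hL1bar hK
  have hkAB : k p.1 * lineDeriv ℂ (fun y => lineDeriv ℂ F y (1, 0, 0, 0)) p.1 (0, 0, 1, 0) +
      lineDeriv ℂ (fun y => lineDeriv ℂ F y (0, 1, 0, 0)) p.1 (0, 0, 1, 0) = 0 := by
    rw [hk, div_mul_cancel₀ _ (hne p.1 hp), neg_add_cancel]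
  have hk_diff : DifferentiableAt ℂ k p.1 := by
    rw [hk]
    exact (((hFp.analyticAt_lineDeriv _).analyticAt_lineDeriv _).neg.div
      ((hFp.analyticAt_lineDeriv _).analyticAt_lineDeriv _) (hne p.1 hp)).differentiableAt
  have hk_fst : HasFDerivAt (fun y => k y.1)
      ((fderiv ℂ k p.1).comp (ContinuousLinearMap.fst ℂ _ ℂ)) p :=
    hk_diff.hasFDerivAt.comp_fst
  have hL1_diff := hFp.differentiableAt_rigidVectorField (-I) (1, 0, 0, 0)
  rw [lieBracket_add_left (hk_fst.differentiableAt.fun_smul hL1_diff)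
      (hFp.differentiableAt_rigidVectorField _ _),
    lieBracket_smul_left hk_fst.differentiableAt hL1_diff,
    hFp.lieBracket_rigidVectorField, hFp.lieBracket_rigidVectorField, hk_fst.fderiv,
    hk_diff.lineDeriv_eq_fderiv]
  ext <;> simp only [rigidVectorField, smul_eq_mul, ContinuousLinearMap.comp_apply,
    ContinuousLinearMap.coe_fst', neg_mul, neg_smul, Prod.smul_mk, mul_one, mul_zero, mul_neg,
    Prod.neg_mk, neg_zero, neg_neg, sub_neg_eq_add, smul_zero, Prod.mk_add_mk, add_zero]
  linear_combination (2 * I) * hkAB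

/-- Bracket identity `[𝒦, ℒ̄₁] = −(∂_{ζ₁}k)·ℒ₁` from (2.9), in the polarized setting on
`Ω × ℂ ⊆ ℂ⁴ × ℂ` (last coordinate `v`), with `ℒ₁ = ∂_{z₁} − iF_{z₁}∂_v`,
`ℒ₂ = ∂_{z₂} − iF_{z₂}∂_v`, `ℒ̄₁ = ∂_{ζ₁} + iF_{ζ₁}∂_v`, `𝒦 = kℒ₁ + ℒ₂`,
`k = −F_{z₂ζ₁}/F_{z₁ζ₁}`. -/
theorem bracket_K_L1bar (Ω : Set (ℂ × ℂ × ℂ × ℂ)) (hΩ : IsOpen Ω)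
    (F : ℂ × ℂ × ℂ × ℂ → ℂ) (hF : AnalyticOnNhd ℂ F Ω)
    (hne : ∀ q ∈ Ω, pc1 (pz1 F) q ≠ 0)
    (k : ℂ × ℂ × ℂ × ℂ → ℂ) (hk : k = fun q => -(pc1 (pz2 F) q) / pc1 (pz1 F) q)
    (L1 L2 L1bar K : (ℂ × ℂ × ℂ × ℂ) × ℂ → (ℂ × ℂ × ℂ × ℂ) × ℂ)
    (hL1 : L1 = fun p => (((1 : ℂ), (0 : ℂ), (0 : ℂ), (0 : ℂ)), -I * pz1 F p.1))
    (hL2 : L2 = fun p => (((0 : ℂ), (1 : ℂ), (0 : ℂ), (0 : ℂ)), -I * pz2 F p.1))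
    (hL1bar : L1bar = fun p => (((0 : ℂ), (0 : ℂ), (1 : ℂ), (0 : ℂ)), I * pc1 F p.1))
    (hK : K = fun p => k p.1 • L1 p + L2 p) :
    ∀ p : (ℂ × ℂ × ℂ × ℂ) × ℂ, p.1 ∈ Ω →
      VectorField.lieBracket ℂ K L1bar p = -(pc1 k p.1) • L1 p :=
  bracket_K_L1bar_general Ω F hF hne k hk L1 L2 L1bar K hL1 hL2 hL1bar hK
end
end

section
/- (Involutivity of the Levi kernel with its conjugate, rigid case; identity [𝒦, 𝒦̄] ≡ 0 from (2.9).) In the polarized setting, if F is holomorphic on Ω ⊆ ℂ⁴, F_{z₁ζ₁} vanishes nowhere on Ω, and the constant Levi rank 1 identity F_{z₁ζ₁}F_{z₂ζ₂} − F_{z₂ζ₁}F_{z₁ζ₂} ≡ 0 holds on Ω, then the vector fields on Ω × ℂ satisfy [𝒦, 𝒦̄] = 0, where 𝒦 := k ℒ₁ + ℒ₂ and 𝒦̄ := k̄ ℒ̄₁ + ℒ̄₂. -/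
open Complex

noncomputable section

/-!
Write `Ψ = D²F` and `V = k e₁ + e₂`, `W = k̄ e₃ + e₄` for the `ℂ⁴`-parts of `𝒦`, `𝒦̄`. The
definitions of `k`, `k̄` and the Levi rank 1 identity say that, throughout `Ω`, `Ψ(a, V) = 0` for
`a ∈ span {e₃, e₄}` and `Ψ(b, W) = 0` for `b ∈ span {e₁, e₂}`. Differentiating the first identity
along `W` and the second along `a`, the symmetry of `D³F` gives `Ψ(a, DV · W) = 0`. As
`DV · W = 𝒦̄(k) e₁` and `Ψ(e₃, e₁) = F_{z₁ζ₁} ≠ 0`, this forces `𝒦̄(k) = 0`, and likewise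
`𝒦(k̄) = 0`. The bracket of two fields `X + c dF(X) ∂_v` whose coefficients do not depend on `v`
is `[V, W] + (c' D(dF(W)) · V - c D(dF(V)) · W) ∂_v`, and this vanishes once `𝒦̄(k) = 𝒦(k̄) = 0`
and `Ψ(V, W) = 0`.
-/

open Filter Topology VectorField

section NontriviallyNormedField

variable {𝕜 : Type*} [NontriviallyNormedField 𝕜] {E G : Type*} [NormedAddCommGroup E]
  [NormedSpace 𝕜 E] [NormedAddCommGroup G] [NormedSpace 𝕜 G]

theorem lieBracket_prodMk_fst {V W : E → E} {a b : E → G} {q : E} (t : G)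
    (hV : DifferentiableAt 𝕜 V q) (hW : DifferentiableAt 𝕜 W q)
    (ha : DifferentiableAt 𝕜 a q) (hb : DifferentiableAt 𝕜 b q) :
    lieBracket 𝕜 (fun p : E × G => (V p.1, a p.1)) (fun p => (W p.1, b p.1)) (q, t) =
      (lieBracket 𝕜 V W q, fderiv 𝕜 b q (V q) - fderiv 𝕜 a q (W q)) := by
  have hX : HasFDerivAt (fun p : E × G => (V p.1, a p.1)) _ (q, t) :=
    (hV.hasFDerivAt.prodMk ha.hasFDerivAt).comp (f := Prod.fst) (q, t) hasFDerivAt_fst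
  have hY : HasFDerivAt (fun p : E × G => (W p.1, b p.1)) _ (q, t) :=
    (hW.hasFDerivAt.prodMk hb.hasFDerivAt).comp (f := Prod.fst) (q, t) hasFDerivAt_fst
  simp [lieBracket, hX.fderiv, hY.fderiv]

theorem fderiv_apply_apply_eq {H : Type*} [NormedAddCommGroup H] [NormedSpace 𝕜 H]
    {B : E → E →L[𝕜] G →L[𝕜] H} {X : E → G} {q : E}
    (hB : DifferentiableAt 𝕜 B q) (hX : DifferentiableAt 𝕜 X q) (u w : E) :
    fderiv 𝕜 (fun y => B y u (X y)) q w = fderiv 𝕜 B q w u (X q) + B q u (fderiv 𝕜 X q w) := by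
  rw [fderiv_clm_apply (hB.clm_apply (differentiableAt_const u)) hX,
    fderiv_clm_apply hB (differentiableAt_const u)]
  simp [add_comm]

theorem ContDiffAt.differentiableAt_fderiv_fderiv {F : E → G} {q : E}
    (hF : ContDiffAt 𝕜 3 F q) : DifferentiableAt 𝕜 (fderiv 𝕜 (fderiv 𝕜 F)) q :=
  ((hF.fderiv_right (m := 2) (by norm_num)).fderiv_right (m := 1) (by norm_num)).differentiableAt
    one_ne_zero

/-- `rigidField F (-i) (k e₁ + e₂)` is `𝒦 = kℒ₁ + ℒ₂`, and `rigidField F i (k̄ e₃ + e₄)` is `𝒦̄`. -/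
def rigidField (F : E → 𝕜) (c : 𝕜) (V : E → E) (p : E × 𝕜) : E × 𝕜 :=
  (V p.1, c * fderiv 𝕜 F p.1 (V p.1))

def IsPartialDeriv (P : (E → 𝕜) → E → 𝕜) (v : E) : Prop :=
  ∀ G y, DifferentiableAt 𝕜 G y → P G y = fderiv 𝕜 G y v

variable {P Q : (E → 𝕜) → E → 𝕜} {u v : E} {F : E → 𝕜} {y : E}

theorem IsPartialDeriv.eventuallyEq (hP : IsPartialDeriv P u) (hF : ContDiffAt 𝕜 2 F y) :
    P F =ᶠ[𝓝 y] fun z => fderiv 𝕜 F z u := by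
  filter_upwards [hF.eventually (by simp)] with z hz
  exact hP F z (hz.differentiableAt (by simp))

theorem IsPartialDeriv.apply_apply_eq (hP : IsPartialDeriv P u) (hQ : IsPartialDeriv Q v)
    (hF : ContDiffAt 𝕜 2 F y) : Q (P F) y = fderiv 𝕜 (fderiv 𝕜 F) y v u := by
  have hΦ : DifferentiableAt 𝕜 (fderiv 𝕜 F) y :=
    (hF.fderiv_right (m := 1) le_rfl).differentiableAt one_ne_zero
  have hPF := hP.eventuallyEq hF
  rw [hQ _ _ ((hΦ.clm_apply (differentiableAt_const u)).congr_of_eventuallyEq hPF),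
    hPF.fderiv_eq, fderiv_clm_apply hΦ (differentiableAt_const u)]
  simp

theorem IsPartialDeriv.differentiableAt_apply_apply (hP : IsPartialDeriv P u)
    (hQ : IsPartialDeriv Q v) (hF : ContDiffAt 𝕜 3 F y) : DifferentiableAt 𝕜 (Q (P F)) y := by
  refine ((hF.differentiableAt_fderiv_fderiv.clm_apply (differentiableAt_const v)).clm_apply
    (differentiableAt_const u)).congr_of_eventuallyEq ?_
  filter_upwards [hF.eventually (by simp)] with z hz
  exact hP.apply_apply_eq hQ (hz.of_le (by norm_num))

theorem IsPartialDeriv.differentiableAt_neg_div {P' Q' : (E → 𝕜) → E → 𝕜} {u' v' : E}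
    (hP : IsPartialDeriv P u) (hQ : IsPartialDeriv Q v) (hP' : IsPartialDeriv P' u')
    (hQ' : IsPartialDeriv Q' v') (hF : ContDiffAt 𝕜 3 F y) (hne : Q' (P' F) y ≠ 0) :
    DifferentiableAt 𝕜 (fun z => -Q (P F) z / Q' (P' F) z) y := by
  simp only [div_eq_mul_inv]
  exact (hP.differentiableAt_apply_apply hQ hF).neg.mul
    ((hP'.differentiableAt_apply_apply hQ' hF).inv hne)

theorem IsPartialDeriv.eventuallyEq_rigidField (hP : IsPartialDeriv P u) (hQ : IsPartialDeriv Q v)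
    (hF : ∀ᶠ z in 𝓝 y, DifferentiableAt 𝕜 F z) (k : E → 𝕜) (c t : 𝕜) :
    (fun p : E × 𝕜 => k p.1 • (u, c * P F p.1) + (v, c * Q F p.1)) =ᶠ[𝓝 (y, t)]
      rigidField F c fun z => k z • u + v := by
  filter_upwards [hF.prod_inl_nhds t] with p hp
  rw [hP F p.1 hp, hQ F p.1 hp]
  ext <;> simp [rigidField]
  ring

end NontriviallyNormedField

section RCLike

variable {𝕜 : Type*} [RCLike 𝕜] {E : Type*} [NormedAddCommGroup E] [NormedSpace 𝕜 E]
  {F : E → 𝕜} {q : E}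

theorem lieBracket_rigidField_eq_zero (hF : ContDiffAt 𝕜 2 F q)
    {V W : E → E} (hV : DifferentiableAt 𝕜 V q) (hW : DifferentiableAt 𝕜 W q)
    (hVW : fderiv 𝕜 V q (W q) = 0) (hWV : fderiv 𝕜 W q (V q) = 0)
    (hker : fderiv 𝕜 (fderiv 𝕜 F) q (V q) (W q) = 0) (c c' t : 𝕜) :
    lieBracket 𝕜 (rigidField F c V) (rigidField F c' W) (q, t) = 0 := by
  have hΦ : DifferentiableAt 𝕜 (fderiv 𝕜 F) q :=
    (hF.fderiv_right (m := 1) le_rfl).differentiableAt one_ne_zero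
  have hsymm := hF.isSymmSndFDerivAt (by simp)
  unfold rigidField
  rw [lieBracket_prodMk_fst t hV hW ((hΦ.clm_apply hV).const_mul c)
      ((hΦ.clm_apply hW).const_mul c'),
    fderiv_const_mul (hΦ.clm_apply hW), fderiv_const_mul (hΦ.clm_apply hV),
    fderiv_clm_apply hΦ hW, fderiv_clm_apply hΦ hV, lieBracket_eq]
  simp [hVW, hWV, hsymm (W q) (V q), hker]

theorem fderiv_fderiv_fderiv_apply_rotate (hF : ContDiffAt 𝕜 3 F q) (u v w : E) :
    fderiv 𝕜 (fderiv 𝕜 (fderiv 𝕜 F)) q u v w = fderiv 𝕜 (fderiv 𝕜 (fderiv 𝕜 F)) q v w u := by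
  have hΨ := hF.differentiableAt_fderiv_fderiv
  have hΨsymm : (fun y => fderiv 𝕜 (fderiv 𝕜 F) y u w) =ᶠ[𝓝 q]
      fun y => fderiv 𝕜 (fderiv 𝕜 F) y w u := by
    filter_upwards [hF.eventually (by simp)] with y hy
    exact (hy.isSymmSndFDerivAt (by simp; norm_num)) u w
  have hΦsymm := (hF.fderiv_right (m := 2) (by norm_num)).isSymmSndFDerivAt (by simp) u v
  have h := fderiv_apply_apply_eq hΨ (differentiableAt_const w) u v
  rw [hΨsymm.fderiv_eq, fderiv_apply_apply_eq hΨ (differentiableAt_const u) w v] at h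
  simpa [hΦsymm] using h.symm

theorem fderiv_fderiv_apply_fderiv_eq_zero (hF : ContDiffAt 𝕜 3 F q)
    {S T : Set E} {V W : E → E} (hV : DifferentiableAt 𝕜 V q) (hW : DifferentiableAt 𝕜 W q)
    (hVS : ∀ᶠ y in 𝓝 q, ∀ a ∈ S, fderiv 𝕜 (fderiv 𝕜 F) y a (V y) = 0)
    (hWT : ∀ᶠ y in 𝓝 q, ∀ b ∈ T, fderiv 𝕜 (fderiv 𝕜 F) y b (W y) = 0)
    (hVT : V q ∈ T) (hWS : ∀ u, fderiv 𝕜 W q u ∈ S) {a : E} (ha : a ∈ S) :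
    fderiv 𝕜 (fderiv 𝕜 F) q a (fderiv 𝕜 V q (W q)) = 0 := by
  have hΨ := hF.differentiableAt_fderiv_fderiv
  have hW' : fderiv 𝕜 (fun y => fderiv 𝕜 (fderiv 𝕜 F) y (V q) (W y)) q a = 0 := by
    have h : (fun y => fderiv 𝕜 (fderiv 𝕜 F) y (V q) (W y)) =ᶠ[𝓝 q] fun _ => 0 :=
      hWT.mono fun y hy => hy _ hVT
    simp [h.fderiv_eq]
  have hV' : fderiv 𝕜 (fun y => fderiv 𝕜 (fderiv 𝕜 F) y a (V y)) q (W q) = 0 := by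
    have h : (fun y => fderiv 𝕜 (fderiv 𝕜 F) y a (V y)) =ᶠ[𝓝 q] fun _ => 0 :=
      hVS.mono fun y hy => hy _ ha
    simp [h.fderiv_eq]
  rw [fderiv_apply_apply_eq hΨ hW] at hW'
  rw [fderiv_apply_apply_eq hΨ hV, fderiv_fderiv_fderiv_apply_rotate hF] at hV'
  have hVW : fderiv 𝕜 (fderiv 𝕜 F) q (V q) (fderiv 𝕜 W q a) = 0 := by
    rw [(hF.isSymmSndFDerivAt (by simp; norm_num)) (V q)]
    exact hVS.self_of_nhds _ (hWS a)
  rw [hVW, add_zero] at hW'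
  rwa [hW', zero_add] at hV'

theorem lieBracket_rigidField_smul_add_eq_zero (hF : ContDiffAt 𝕜 3 F q) {S T : Submodule 𝕜 E}
    {k l : E → 𝕜} (hk : DifferentiableAt 𝕜 k q) (hl : DifferentiableAt 𝕜 l q)
    {e e' f f' : E} (he : e ∈ T) (he' : e' ∈ T) (hf : f ∈ S) (hf' : f' ∈ S)
    (hVS : ∀ᶠ y in 𝓝 q, ∀ a ∈ S, fderiv 𝕜 (fderiv 𝕜 F) y a (k y • e + e') = 0)
    (hWT : ∀ᶠ y in 𝓝 q, ∀ b ∈ T, fderiv 𝕜 (fderiv 𝕜 F) y b (l y • f + f') = 0)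
    (hfe : fderiv 𝕜 (fderiv 𝕜 F) q f e ≠ 0) (c c' t : 𝕜) :
    lieBracket 𝕜 (rigidField F c fun y => k y • e + e')
      (rigidField F c' fun y => l y • f + f') (q, t) = 0 := by
  have hV : DifferentiableAt 𝕜 (fun y => k y • e + e') q := (hk.smul_const e).add_const e'
  have hW : DifferentiableAt 𝕜 (fun y => l y • f + f') q := (hl.smul_const f).add_const f'
  have hDV : ∀ w, fderiv 𝕜 (fun y => k y • e + e') q w = fderiv 𝕜 k q w • e := by
    simp [fderiv_add_const, fderiv_smul_const hk]
  have hDW : ∀ w, fderiv 𝕜 (fun y => l y • f + f') q w = fderiv 𝕜 l q w • f := by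
    simp [fderiv_add_const, fderiv_smul_const hl]
  have hVT : k q • e + e' ∈ T := T.add_mem (T.smul_mem _ he) he'
  have hWS : l q • f + f' ∈ S := S.add_mem (S.smul_mem _ hf) hf'
  have hef : fderiv 𝕜 (fderiv 𝕜 F) q e f ≠ 0 := by
    rwa [(hF.isSymmSndFDerivAt (by simp; norm_num)) e]
  have hVW : fderiv 𝕜 (fun y => k y • e + e') q (l q • f + f') = 0 := by
    have h := fderiv_fderiv_apply_fderiv_eq_zero hF hV hW hVS hWT hVT
      (fun w => hDW w ▸ S.smul_mem _ hf) hf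
    rw [hDV, map_smul, smul_eq_mul, mul_eq_zero] at h
    rw [hDV, h.resolve_right hfe, zero_smul]
  have hWV : fderiv 𝕜 (fun y => l y • f + f') q (k q • e + e') = 0 := by
    have h := fderiv_fderiv_apply_fderiv_eq_zero hF hW hV hWT hVS hWS
      (fun w => hDV w ▸ T.smul_mem _ he) he
    rw [hDW, map_smul, smul_eq_mul, mul_eq_zero] at h
    rw [hDW, h.resolve_right hef, zero_smul]
  exact lieBracket_rigidField_eq_zero (hF.of_le (by norm_num)) hV hW hVW hWV
    (hWT.self_of_nhds _ hVT) c c' t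

end RCLike

theorem isPartialDeriv_pz1 : IsPartialDeriv pz1 ((1, 0, 0, 0) : ℂ × ℂ × ℂ × ℂ) := fun _ q hG =>
  (hG.hasFDerivAt.comp_hasDerivAt q.1 ((hasDerivAt_id q.1).prodMk (hasDerivAt_const _ _))).deriv

theorem isPartialDeriv_pz2 : IsPartialDeriv pz2 ((0, 1, 0, 0) : ℂ × ℂ × ℂ × ℂ) := fun _ q hG =>
  (hG.hasFDerivAt.comp_hasDerivAt q.2.1 ((hasDerivAt_const _ _).prodMk
    ((hasDerivAt_id _).prodMk (hasDerivAt_const _ _)))).deriv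

theorem isPartialDeriv_pc1 : IsPartialDeriv pc1 ((0, 0, 1, 0) : ℂ × ℂ × ℂ × ℂ) := fun _ q hG =>
  (hG.hasFDerivAt.comp_hasDerivAt q.2.2.1 ((hasDerivAt_const _ _).prodMk
    ((hasDerivAt_const _ _).prodMk ((hasDerivAt_id _).prodMk (hasDerivAt_const _ _))))).deriv

theorem isPartialDeriv_pc2 : IsPartialDeriv pc2 ((0, 0, 0, 1) : ℂ × ℂ × ℂ × ℂ) := fun _ q hG =>
  (hG.hasFDerivAt.comp_hasDerivAt q.2.2.2 ((hasDerivAt_const _ _).prodMk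
    ((hasDerivAt_const _ _).prodMk ((hasDerivAt_const _ _).prodMk (hasDerivAt_id _))))).deriv

local notation "e₁" => ((1, 0, 0, 0) : ℂ × ℂ × ℂ × ℂ)
local notation "e₂" => ((0, 1, 0, 0) : ℂ × ℂ × ℂ × ℂ)
local notation "e₃" => ((0, 0, 1, 0) : ℂ × ℂ × ℂ × ℂ)
local notation "e₄" => ((0, 0, 0, 1) : ℂ × ℂ × ℂ × ℂ)

section Levi

variable {F : ℂ × ℂ × ℂ × ℂ → ℂ} {y : ℂ × ℂ × ℂ × ℂ}

theorem fderiv_fderiv_apply_K_eq_zero (hF : ContDiffAt ℂ 2 F y) (hne : pc1 (pz1 F) y ≠ 0)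
    (hLevi : pc1 (pz1 F) y * pc2 (pz2 F) y - pc1 (pz2 F) y * pc2 (pz1 F) y = 0)
    {k : ℂ} (hk : k = -(pc1 (pz2 F) y) / pc1 (pz1 F) y)
    {a : ℂ × ℂ × ℂ × ℂ} (ha : a ∈ Submodule.span ℂ {e₃, e₄}) :
    fderiv ℂ (fderiv ℂ F) y a (k • e₁ + e₂) = 0 := by
  obtain ⟨c, d, rfl⟩ := Submodule.mem_span_pair.mp ha
  simp only [map_add, map_smul, add_apply, smul_apply, smul_eq_mul]
  rw [← isPartialDeriv_pz1.apply_apply_eq isPartialDeriv_pc1 hF,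
    ← isPartialDeriv_pz2.apply_apply_eq isPartialDeriv_pc1 hF,
    ← isPartialDeriv_pz1.apply_apply_eq isPartialDeriv_pc2 hF,
    ← isPartialDeriv_pz2.apply_apply_eq isPartialDeriv_pc2 hF, hk]
  field_simp
  linear_combination d * hLevi

theorem fderiv_fderiv_apply_Kbar_eq_zero (hF : ContDiffAt ℂ 2 F y) (hne : pc1 (pz1 F) y ≠ 0)
    (hLevi : pc1 (pz1 F) y * pc2 (pz2 F) y - pc1 (pz2 F) y * pc2 (pz1 F) y = 0)
    {kbar : ℂ} (hkbar : kbar = -(pc2 (pz1 F) y) / pc1 (pz1 F) y)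
    {b : ℂ × ℂ × ℂ × ℂ} (hb : b ∈ Submodule.span ℂ {e₁, e₂}) :
    fderiv ℂ (fderiv ℂ F) y b (kbar • e₃ + e₄) = 0 := by
  obtain ⟨c, d, rfl⟩ := Submodule.mem_span_pair.mp hb
  have hsymm := hF.isSymmSndFDerivAt (by simp)
  simp only [map_add, map_smul, add_apply, smul_apply, smul_eq_mul]
  rw [hsymm e₁ e₃, hsymm e₁ e₄, hsymm e₂ e₃, hsymm e₂ e₄,
    ← isPartialDeriv_pz1.apply_apply_eq isPartialDeriv_pc1 hF,
    ← isPartialDeriv_pz2.apply_apply_eq isPartialDeriv_pc1 hF,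
    ← isPartialDeriv_pz1.apply_apply_eq isPartialDeriv_pc2 hF,
    ← isPartialDeriv_pz2.apply_apply_eq isPartialDeriv_pc2 hF, hkbar]
  field_simp
  linear_combination d * hLevi

end Levi

/-- Involutivity of the Levi kernel with its conjugate in the rigid case: `[𝒦, 𝒦̄] ≡ 0` on
`Ω × ℂ ⊆ ℂ⁴ × ℂ` (last coordinate `v`), where `𝒦 = kℒ₁ + ℒ₂`, `𝒦̄ = k̄ℒ̄₁ + ℒ̄₂`, with
`ℒ₁ = ∂_{z₁} − iF_{z₁}∂_v`, `ℒ₂ = ∂_{z₂} − iF_{z₂}∂_v`, `ℒ̄₁ = ∂_{ζ₁} + iF_{ζ₁}∂_v`,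
`ℒ̄₂ = ∂_{ζ₂} + iF_{ζ₂}∂_v`, `k = −F_{z₂ζ₁}/F_{z₁ζ₁}`, `k̄ = −F_{z₁ζ₂}/F_{z₁ζ₁}`, under
the constant Levi rank 1 hypothesis. -/
theorem bracket_K_Kbar_vanishes (Ω : Set (ℂ × ℂ × ℂ × ℂ)) (hΩ : IsOpen Ω)
    (F : ℂ × ℂ × ℂ × ℂ → ℂ) (hF : AnalyticOnNhd ℂ F Ω)
    (hne : ∀ q ∈ Ω, pc1 (pz1 F) q ≠ 0)
    (hLevi : ∀ q ∈ Ω, pc1 (pz1 F) q * pc2 (pz2 F) q - pc1 (pz2 F) q * pc2 (pz1 F) q = 0)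
    (k kbar : ℂ × ℂ × ℂ × ℂ → ℂ)
    (hk : k = fun q => -(pc1 (pz2 F) q) / pc1 (pz1 F) q)
    (hkbar : kbar = fun q => -(pc2 (pz1 F) q) / pc1 (pz1 F) q)
    (L1 L2 L1bar L2bar K Kbar : (ℂ × ℂ × ℂ × ℂ) × ℂ → (ℂ × ℂ × ℂ × ℂ) × ℂ)
    (hL1 : L1 = fun p => (((1 : ℂ), (0 : ℂ), (0 : ℂ), (0 : ℂ)), -I * pz1 F p.1))
    (hL2 : L2 = fun p => (((0 : ℂ), (1 : ℂ), (0 : ℂ), (0 : ℂ)), -I * pz2 F p.1))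
    (hL1bar : L1bar = fun p => (((0 : ℂ), (0 : ℂ), (1 : ℂ), (0 : ℂ)), I * pc1 F p.1))
    (hL2bar : L2bar = fun p => (((0 : ℂ), (0 : ℂ), (0 : ℂ), (1 : ℂ)), I * pc2 F p.1))
    (hK : K = fun p => k p.1 • L1 p + L2 p)
    (hKbar : Kbar = fun p => kbar p.1 • L1bar p + L2bar p) :
    ∀ p : (ℂ × ℂ × ℂ × ℂ) × ℂ, p.1 ∈ Ω →
      VectorField.lieBracket ℂ K Kbar p = 0 := by
  rintro ⟨q, t⟩ (hq : q ∈ Ω)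
  subst hK hKbar hL1 hL2 hL1bar hL2bar
  have hΩq : ∀ᶠ y in 𝓝 q, y ∈ Ω := hΩ.mem_nhds hq
  have hF3 : ContDiffAt ℂ 3 F q := (hF q hq).contDiffAt
  have hFd : ∀ᶠ y in 𝓝 q, DifferentiableAt ℂ F y :=
    hΩq.mono fun y hy => (hF y hy).differentiableAt
  beta_reduce
  rw [EventuallyEq.lieBracket_vectorField_eq
    (isPartialDeriv_pz1.eventuallyEq_rigidField isPartialDeriv_pz2 hFd k (-I) t)
    (isPartialDeriv_pc1.eventuallyEq_rigidField isPartialDeriv_pc2 hFd kbar I t)]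
  refine lieBracket_rigidField_smul_add_eq_zero (S := Submodule.span ℂ {e₃, e₄})
    (T := Submodule.span ℂ {e₁, e₂}) hF3 ?_ ?_
    (Submodule.subset_span (by simp)) (Submodule.subset_span (by simp))
    (Submodule.subset_span (by simp)) (Submodule.subset_span (by simp)) ?_ ?_ ?_ _ _ t
  · rw [hk]
    exact isPartialDeriv_pz2.differentiableAt_neg_div isPartialDeriv_pc1 isPartialDeriv_pz1
      isPartialDeriv_pc1 hF3 (hne q hq)
  · rw [hkbar]
    exact isPartialDeriv_pz1.differentiableAt_neg_div isPartialDeriv_pc2 isPartialDeriv_pz1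
      isPartialDeriv_pc1 hF3 (hne q hq)
  · filter_upwards [hΩq] with y hy a ha
    exact fderiv_fderiv_apply_K_eq_zero (hF y hy).contDiffAt (hne y hy) (hLevi y hy)
      (congrFun hk y) ha
  · filter_upwards [hΩq] with y hy b hb
    exact fderiv_fderiv_apply_Kbar_eq_zero (hF y hy).contDiffAt (hne y hy) (hLevi y hy)
      (congrFun hkbar y) hb
  · rw [← isPartialDeriv_pz1.apply_apply_eq isPartialDeriv_pc1 (hF3.of_le (by norm_num))]
    exact hne q hq
end
end
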